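/- Let d ≥ 2, let K ⊆ ℝ^d be a convex body and let δ ∈ (0, vol(K)). If the surface of centers S_δ is a sphere centered at the center of mass C(K), i.e. there exists R ≥ 0 such that ‖C_δ(ξ) − C(K)‖ = R for every unit vector ξ ∈ S^{d−1}, then K floats in equilibrium in direction ξ at level δ for every ξ ∈ S^{d−1}. -/

import Mathlib

open MeasureTheory Metric Set Filter
open scoped InnerProductSpace ENNReal Pointwise NNReal Topology

/-- The center of mass of a set `L` with respect to a measure `μ`. -/
noncomputable def centroid {d : ℕ} (μ : Measure (EuclideanSpace ℝ (Fin d)))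
    (L : Set (EuclideanSpace ℝ (Fin d))) : EuclideanSpace ℝ (Fin d) :=
  (μ L).toReal⁻¹ • ∫ x in L, x ∂μ

/-!
Let `v = C(K) - C_δ(ξ) ≠ 0` and `u = v / ‖v‖`. All buoyancy centres lie on the sphere of radius
`‖v‖` about `C(K)`, so `C_δ(ξ)` minimises `⟪·, u⟫` over `S_δ`; in particular
`⟪C_δ(ξ), u⟫ ≤ ⟪C_δ(u), u⟫`, i.e. the cap in direction `ξ` has no larger `∫ ⟪x, u⟫` than the cap in
direction `u`. By the bathtub principle the latter is, up to null sets, the unique minimiser of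
this integral among subsets of `K` of volume `δ`, so the two caps agree almost everywhere. Near an
interior point of `K` on the cutting hyperplane this forces the two half-spaces to coincide, so
`u = ξ`.
-/

section Bathtub

variable {α : Type*} [MeasurableSpace α] {μ : Measure α} {f : α → ℝ} {τ : ℝ}

theorem mul_measureReal_lt_setIntegral {s : Set α} (hs : MeasurableSet s) (hμs : μ s ≠ ∞)
    (hpos : 0 < μ s) (hf : IntegrableOn f s μ) (hτ : ∀ x ∈ s, τ < f x) :
    τ * μ.real s < ∫ x in s, f x ∂μ := by
  have hsupp : Function.support (fun x => f x - τ) ∩ s = s :=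
    inter_eq_right.2 fun x hx => sub_ne_zero.2 (hτ x hx).ne'
  have hnonneg : 0 ≤ᵐ[μ.restrict s] fun x => f x - τ :=
    (ae_restrict_iff' hs).2 (ae_of_all _ fun x hx => sub_nonneg.2 (hτ x hx).le)
  have hfτ : IntegrableOn (fun _ => τ) s μ := integrableOn_const hμs
  have hint := (setIntegral_pos_iff_support_of_nonneg_ae hnonneg (hf.sub hfτ)).2 (by rwa [hsupp])
  rw [integral_sub hf hfτ, setIntegral_const, smul_eq_mul] at hint
  linarith

/-- Equality case of the bathtub principle. -/
theorem ae_eq_inter_sublevel_of_setIntegral_le {K S : Set α} (hSK : S ⊆ K) (hS : MeasurableSet S)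
    (hA : MeasurableSet (K ∩ {x | f x ≤ τ})) (hμ : μ S = μ (K ∩ {x | f x ≤ τ})) (hμS : μ S ≠ ∞)
    (hf : IntegrableOn f K μ) (hle : ∫ x in S, f x ∂μ ≤ ∫ x in K ∩ {x | f x ≤ τ}, f x ∂μ) :
    S =ᵐ[μ] (K ∩ {x | f x ≤ τ} : Set α) := by
  set A : Set α := K ∩ {x | f x ≤ τ}
  have hdiff : μ (S \ A) = μ (A \ S) := measure_sdiff_symm hS.nullMeasurableSet
    hA.nullMeasurableSet hμ (measure_ne_top_of_subset inter_subset_left hμS)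
  suffices hSA : μ (S \ A) = 0 from ae_eq_set.2 ⟨hSA, hdiff ▸ hSA⟩
  by_contra hSA
  have hfS := hf.mono_set hSK
  have hfA : IntegrableOn f A μ := hf.mono_set inter_subset_left
  have hSA_fin : μ (S \ A) ≠ ∞ := measure_ne_top_of_subset sdiff_subset hμS
  have hlow : τ * μ.real (S \ A) < ∫ x in S \ A, f x ∂μ :=
    mul_measureReal_lt_setIntegral (hS.diff hA) hSA_fin (pos_iff_ne_zero.2 hSA)
      (hfS.mono_set sdiff_subset) fun x hx => not_le.1 fun h => hx.2 ⟨hSK hx.1, h⟩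
  have hup : ∫ x in A \ S, f x ∂μ ≤ τ * μ.real (A \ S) := by
    have hAS_fin : μ (A \ S) ≠ ∞ := hdiff ▸ hSA_fin
    calc ∫ x in A \ S, f x ∂μ ≤ ∫ _ in A \ S, τ ∂μ :=
          setIntegral_mono_on (hfA.mono_set sdiff_subset) (integrableOn_const hAS_fin)
            (hA.diff hS) fun x hx => hx.1.2
      _ = τ * μ.real (A \ S) := by rw [setIntegral_const, smul_eq_mul, mul_comm]
  have hreal : μ.real (S \ A) = μ.real (A \ S) := by rw [measureReal_def, hdiff, measureReal_def]
  have hS_split := integral_inter_add_sdiff hA hfS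
  have hA_split := integral_inter_add_sdiff hS hfA
  rw [inter_comm A S] at hA_split
  rw [hreal] at hlow
  linarith

end Bathtub

theorem le_of_lt_of_measure_inter_sublevel_sdiff_eq_zero {X : Type*} [TopologicalSpace X]
    [MeasurableSpace X] {μ : Measure X} [μ.IsOpenPosMeasure] {K : Set X} {f g : X → ℝ} {a b : ℝ}
    (hf : Continuous f) (hg : Continuous g)
    (h : μ ((K ∩ {x | f x ≤ a}) \ (K ∩ {x | g x ≤ b})) = 0) {x : X} (hx : x ∈ interior K)
    (hfx : f x < a) : g x ≤ b := by
  by_contra! hgx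
  have hO : IsOpen (interior K ∩ {x | f x < a} ∩ {x | b < g x}) :=
    (isOpen_interior.inter (isOpen_lt hf continuous_const)).inter (isOpen_lt continuous_const hg)
  have hsub : interior K ∩ {x | f x < a} ∩ {x | b < g x} ⊆
      (K ∩ {x | f x ≤ a}) \ (K ∩ {x | g x ≤ b}) := by
    rintro y ⟨⟨hyK, hyf : f y < a⟩, hyg : b < g y⟩
    exact ⟨⟨interior_subset hyK, hyf.le⟩, fun hy => hyg.not_ge hy.2⟩
  exact (hO.measure_pos μ ⟨x, ⟨hx, hfx⟩, hgx⟩).ne' (measure_mono_null hsub h)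

theorem Convex.exists_mem_interior_eq_of_measure_inter_sublevel {E : Type*}
    [NormedAddCommGroup E] [NormedSpace ℝ E] [MeasurableSpace E] [BorelSpace E]
    [FiniteDimensional ℝ E] {μ : Measure E} [μ.IsAddHaarMeasure] {K : Set E} (hK : Convex ℝ K)
    {f : E → ℝ} (hf : Continuous f) {a : ℝ}
    (h0 : 0 < μ (K ∩ {x | f x ≤ a})) (h1 : μ (K ∩ {x | f x ≤ a}) < μ K) :
    ∃ p ∈ interior K, f p = a := by
  have hfr : μ (frontier K) = 0 := hK.addHaar_frontier μ
  have hK_sub : ∀ x ∈ K, x ∉ interior K → x ∈ frontier K := fun x hx hi => ⟨subset_closure hx, hi⟩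
  obtain ⟨x₀, hx₀, hx₀a⟩ : ∃ x ∈ interior K, f x ≤ a := by
    by_contra! h
    exact h0.ne' (measure_mono_null (fun x hx => hK_sub x hx.1 fun hi => (h x hi).not_ge hx.2) hfr)
  obtain ⟨x₁, hx₁, hx₁a⟩ : ∃ x ∈ interior K, a ≤ f x := by
    by_contra! h
    refine h1.not_ge ?_
    calc μ K ≤ μ (frontier K ∪ K ∩ {x | f x ≤ a}) := measure_mono fun x hx =>
          (em (x ∈ interior K)).elim (fun hi => Or.inr ⟨hx, (h x hi).le⟩)
            (fun hi => Or.inl (hK_sub x hx hi))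
      _ ≤ μ (frontier K) + μ (K ∩ {x | f x ≤ a}) := measure_union_le _ _
      _ = μ (K ∩ {x | f x ≤ a}) := by rw [hfr, zero_add]
  obtain ⟨p, hp, hpa⟩ :=
    hK.interior.isPreconnected.intermediate_value hx₀ hx₁ hf.continuousOn ⟨hx₀a, hx₁a⟩
  exact ⟨p, hp, hpa⟩

section InnerProductSpace

variable {E : Type*} [NormedAddCommGroup E] [InnerProductSpace ℝ E]

theorem eq_of_inner_lt_imp_inner_le {U : Set E} (hU : IsOpen U) {p ξ u : E} (hp : p ∈ U)
    (hξ : ‖ξ‖ = 1) (hu : ‖u‖ = 1) {a b : ℝ} (hpa : ⟪p, ξ⟫_ℝ = a)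
    (h₁ : ∀ x ∈ U, ⟪x, ξ⟫_ℝ < a → ⟪x, u⟫_ℝ ≤ b) (h₂ : ∀ x ∈ U, ⟪x, u⟫_ℝ < b → ⟪x, ξ⟫_ℝ ≤ a) :
    u = ξ := by
  by_contra hne
  have hlt : ⟪u, ξ⟫_ℝ < 1 := by
    refine lt_of_le_of_ne ?_ fun h => hne ((inner_eq_one_iff_of_norm_eq_one hu hξ).1 h)
    simpa [hu, hξ] using real_inner_le_norm u ξ
  -- moving from `p` along `ξ - u` increases `⟪·, ξ⟫` and decreases `⟪·, u⟫`
  set w := ξ - u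
  have hwξ : 0 < ⟪w, ξ⟫_ℝ := by
    rw [inner_sub_left, real_inner_self_eq_norm_sq, hξ]; linarith
  have hwu : ⟪w, u⟫_ℝ < 0 := by
    rw [inner_sub_left, real_inner_self_eq_norm_sq, hu, real_inner_comm]; linarith
  have hnear : ∀ v : E, ∀ᶠ s in 𝓝 (0 : ℝ), p + s • v ∈ U := fun v =>
    (Continuous.continuousAt (by fun_prop)).preimage_mem_nhds (by simpa using hU.mem_nhds hp)
  obtain ⟨s, ⟨hs_add, hs_sub⟩, hs⟩ :=
    ((((hnear w).and (hnear (-w))).filter_mono nhdsWithin_le_nhds).and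
      (self_mem_nhdsWithin (s := Ioi (0 : ℝ)))).exists
  have hsξ : 0 < s * ⟪w, ξ⟫_ℝ := mul_pos hs hwξ
  have hsu : s * ⟪w, u⟫_ℝ < 0 := mul_neg_of_pos_of_neg hs hwu
  have hb_add : b ≤ ⟪p, u⟫_ℝ + s * ⟪w, u⟫_ℝ := by
    by_contra! h
    have := h₂ _ hs_add (by rwa [inner_add_left, real_inner_smul_left])
    rw [inner_add_left, real_inner_smul_left] at this
    linarith
  have hb_sub : ⟪p, u⟫_ℝ - s * ⟪w, u⟫_ℝ ≤ b := by
    have := h₁ _ hs_sub (by rw [inner_add_left, real_inner_smul_left, inner_neg_left]; linarith)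
    rwa [inner_add_left, real_inner_smul_left, inner_neg_left, mul_neg, ← sub_eq_add_neg] at this
  linarith

theorem eq_of_inter_halfspace_ae_eq [FiniteDimensional ℝ E] [MeasurableSpace E] [BorelSpace E]
    {μ : Measure E} [μ.IsAddHaarMeasure] {K : Set E} (hK : Convex ℝ K) {ξ u : E} (hξ : ‖ξ‖ = 1)
    (hu : ‖u‖ = 1) {a b : ℝ} (h0 : 0 < μ (K ∩ {x | ⟪x, ξ⟫_ℝ ≤ a}))
    (h1 : μ (K ∩ {x | ⟪x, ξ⟫_ℝ ≤ a}) < μ K)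
    (hae : (K ∩ {x | ⟪x, ξ⟫_ℝ ≤ a} : Set E) =ᵐ[μ] (K ∩ {x | ⟪x, u⟫_ℝ ≤ b} : Set E)) : u = ξ := by
  obtain ⟨hSA, hAS⟩ := ae_eq_set.1 hae
  have hcont : ∀ v : E, Continuous fun x => ⟪x, v⟫_ℝ := fun v => by fun_prop
  obtain ⟨p, hp, hpa⟩ := hK.exists_mem_interior_eq_of_measure_inter_sublevel (hcont ξ) h0 h1
  exact eq_of_inner_lt_imp_inner_le isOpen_interior hp hξ hu hpa
    (fun x hx => le_of_lt_of_measure_inter_sublevel_sdiff_eq_zero (hcont ξ) (hcont u) hSA hx)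
    (fun x hx => le_of_lt_of_measure_inter_sublevel_sdiff_eq_zero (hcont u) (hcont ξ) hAS hx)

end InnerProductSpace

theorem inner_le_inner_of_norm_sub_le {F : Type*} [NormedAddCommGroup F] [InnerProductSpace ℝ F]
    {c b b' : F} (h : ‖c - b'‖ ≤ ‖c - b‖) : ⟪b, c - b⟫_ℝ ≤ ⟪b', c - b⟫_ℝ := by
  have hcs : ⟪c - b', c - b⟫_ℝ ≤ ⟪c - b, c - b⟫_ℝ :=
    calc ⟪c - b', c - b⟫_ℝ ≤ ‖c - b'‖ * ‖c - b‖ := real_inner_le_norm _ _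
      _ ≤ ‖c - b‖ * ‖c - b‖ := by gcongr
      _ = ⟪c - b, c - b⟫_ℝ := (real_inner_self_eq_norm_mul_norm _).symm
  rw [inner_sub_left, inner_sub_left c b] at hcs
  linarith

theorem inner_centroid {d : ℕ} {μ : Measure (EuclideanSpace ℝ (Fin d))}
    {L : Set (EuclideanSpace ℝ (Fin d))} (hL : IntegrableOn (fun x => x) L μ)
    (u : EuclideanSpace ℝ (Fin d)) :
    ⟪centroid μ L, u⟫_ℝ = (μ L).toReal⁻¹ * ∫ x in L, ⟪x, u⟫_ℝ ∂μ := by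
  rw [centroid, real_inner_smul_left, real_inner_comm u, ← integral_inner hL]
  simp_rw [real_inner_comm u]

theorem floats_of_surface_of_centers_sphere_general
    (d : ℕ)
    (K : Set (EuclideanSpace ℝ (Fin d)))
    (hKcomp : IsCompact K) (hKconv : Convex ℝ K)
    (δ : ℝ) (hδ : 0 < δ) (hδK : ENNReal.ofReal δ < volume K)
    (t : EuclideanSpace ℝ (Fin d) → ℝ)
    (ht : ∀ ξ : EuclideanSpace ℝ (Fin d), ‖ξ‖ = 1 →
      volume (K ∩ {p | ⟪p, ξ⟫_ℝ ≤ t ξ}) = ENNReal.ofReal δ)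
    (hsphere : ∃ R : ℝ, 0 ≤ R ∧ ∀ ξ : EuclideanSpace ℝ (Fin d), ‖ξ‖ = 1 →
      ‖centroid volume (K ∩ {p | ⟪p, ξ⟫_ℝ ≤ t ξ}) - centroid volume K‖ = R) :
    ∀ ξ : EuclideanSpace ℝ (Fin d), ‖ξ‖ = 1 →
      ∃ s : ℝ, centroid volume K - centroid volume (K ∩ {p | ⟪p, ξ⟫_ℝ ≤ t ξ}) = s • ξ := by
  obtain ⟨R, -, hR⟩ := hsphere
  intro ξ hξ
  set S : Set (EuclideanSpace ℝ (Fin d)) := K ∩ {p | ⟪p, ξ⟫_ℝ ≤ t ξ}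
  set v := centroid volume K - centroid volume S
  rcases eq_or_ne v 0 with hv | hv
  · exact ⟨0, by rw [hv, zero_smul]⟩
  set u := ‖v‖⁻¹ • v with hu_def
  set A : Set (EuclideanSpace ℝ (Fin d)) := K ∩ {p | ⟪p, u⟫_ℝ ≤ t u}
  have hu : ‖u‖ = 1 := norm_smul_inv_norm hv
  have hcap : ∀ η, IsCompact (K ∩ {p | ⟪p, η⟫_ℝ ≤ t η}) := fun η =>
    hKcomp.inter_right (isClosed_le (by fun_prop) continuous_const)
  have hcentroid : ∀ η, ‖η‖ = 1 → ⟪centroid volume (K ∩ {p | ⟪p, η⟫_ℝ ≤ t η}), u⟫_ℝ =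
      δ⁻¹ * ∫ x in K ∩ {p | ⟪p, η⟫_ℝ ≤ t η}, ⟪x, u⟫_ℝ := fun η hη => by
    rw [inner_centroid (continuousOn_id.integrableOn_compact (hcap η)), ht η hη,
      ENNReal.toReal_ofReal hδ.le]
  have hextremal : ⟪centroid volume S, u⟫_ℝ ≤ ⟪centroid volume A, u⟫_ℝ := by
    rw [hu_def, real_inner_smul_right, real_inner_smul_right]
    exact mul_le_mul_of_nonneg_left (inner_le_inner_of_norm_sub_le
      (by rw [norm_sub_rev, hR u hu, norm_sub_rev, hR ξ hξ])) (by positivity)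
  have hae : S =ᵐ[volume] A :=
    ae_eq_inter_sublevel_of_setIntegral_le inter_subset_left (hcap ξ).isClosed.measurableSet
      (hcap u).isClosed.measurableSet (by rw [ht ξ hξ, ht u hu]) (hcap ξ).measure_lt_top.ne
      (ContinuousOn.integrableOn_compact hKcomp (by fun_prop))
      (le_of_mul_le_mul_left (by rwa [← hcentroid ξ hξ, ← hcentroid u hu]) (inv_pos.2 hδ))
  have huξ : u = ξ := eq_of_inter_halfspace_ae_eq hKconv hξ hu
    (by rw [ht ξ hξ]; exact ENNReal.ofReal_pos.2 hδ) (by rwa [ht ξ hξ]) hae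
  exact ⟨‖v‖, by rw [← huξ, smul_inv_smul₀ (norm_ne_zero_iff.2 hv)]⟩

theorem floats_of_surface_of_centers_sphere
    (d : ℕ) (hd : 2 ≤ d)
    (K : Set (EuclideanSpace ℝ (Fin d)))
    (hKcomp : IsCompact K) (hKconv : Convex ℝ K) (hKint : (interior K).Nonempty)
    (δ : ℝ) (hδ : 0 < δ) (hδK : ENNReal.ofReal δ < volume K)
    (t : EuclideanSpace ℝ (Fin d) → ℝ)
    (ht : ∀ ξ : EuclideanSpace ℝ (Fin d), ‖ξ‖ = 1 →
      volume (K ∩ {p | ⟪p, ξ⟫_ℝ ≤ t ξ}) = ENNReal.ofReal δ)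
    (hsphere : ∃ R : ℝ, 0 ≤ R ∧ ∀ ξ : EuclideanSpace ℝ (Fin d), ‖ξ‖ = 1 →
      ‖centroid volume (K ∩ {p | ⟪p, ξ⟫_ℝ ≤ t ξ}) - centroid volume K‖ = R) :
    ∀ ξ : EuclideanSpace ℝ (Fin d), ‖ξ‖ = 1 →
      ∃ s : ℝ, centroid volume K - centroid volume (K ∩ {p | ⟪p, ξ⟫_ℝ ≤ t ξ}) = s • ξ :=
  floats_of_surface_of_centers_sphere_general d K hKcomp hKconv δ hδ hδK t ht hsphere
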